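/- Let D ⊆ F_q^{2d} and for t ∈ F_q let ν(t) be the number of pairs (x,y) ∈ D × D with ||x − y|| = t. Then Σ_{t ∈ F_q} ν(t)² ≤ |D|⁴/q + q^{6d} Σ_{M ∈ F_q^{4d}, ||M||_* = 0} |(D × D)^(M)|². -/

import Mathlib

/-!
Detect `‖M‖_* = 0` by `q · 1[‖M‖_* = 0] = ∑_s χ(s ‖M‖_*)`, expand `|(D×D)^(M)|²` as a double sum
over `X, Y ∈ D × D`, and sum over `M` first. For `s = 0` orthogonality keeps only `X = Y`, giving
`q^{2n} |D|²`. For `s ≠ 0` the sum over `M` factors over coordinates; completing the square and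
`G(s) G(-s) = q` for the quadratic Gauss sum `G(s) = ∑_x χ(s x²)` turn it into
`q^n χ((‖X₂ - Y₂‖ - ‖X₁ - Y₁‖) / 4s)`. Substituting `r = (4s)⁻¹`, orthogonality in `r` counts the
pairs with `‖X₁ - Y₁‖ = ‖X₂ - Y₂‖`, which is `∑_t ν(t)²`. This yields the exact identity
`|D|⁴ + q^{3n+1} ∑_{‖M‖_* = 0} |(D×D)^(M)|² = q ∑_t ν(t)² + q^n |D|²` for `D ⊆ F_q^n`;
the inequality drops `q^n |D|²`.
-/

open Finset

/-- `||x|| = ∑ x_i²`. -/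
def nrm {F : Type} [Field F] {n : ℕ} (x : Fin n → F) : F := ∑ i, x i ^ 2

/-- `||M||_* = ||m|| - ||m'||` for `M = (m, m') ∈ F_q^{2d} × F_q^{2d}`. -/
def nrmStar {F : Type} [Field F] {n : ℕ} (M : (Fin n → F) × (Fin n → F)) : F :=
  nrm M.1 - nrm M.2

/-- The Fourier transform of the indicator of `D × D ⊆ F_q^{4d}`. -/
noncomputable def ftDD {F : Type} [Field F] [Fintype F] {n : ℕ} (χ : AddChar F ℂ)
    (D : Finset (Fin n → F)) (M : (Fin n → F) × (Fin n → F)) : ℂ :=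
  ((Fintype.card F : ℂ) ^ (2 * n))⁻¹ *
    ∑ X ∈ D ×ˢ D, χ (-((∑ i, M.1 i * X.1 i) + ∑ i, M.2 i * X.2 i))

namespace AddChar

lemma map_sum_eq_prod {A M ι : Type*} [AddCommMonoid A] [CommMonoid M] (ψ : AddChar A M)
    (s : Finset ι) (f : ι → A) : ψ (∑ i ∈ s, f i) = ∏ i ∈ s, ψ (f i) := by
  classical
  induction s using Finset.induction_on with
  | empty => simp
  | insert a s ha ih => rw [sum_insert ha, prod_insert ha, map_add_eq_mul, ih]

variable {F : Type} [Field F] [Fintype F] {χ : AddChar F ℂ}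

lemma sum_pi_map_sum {ι : Type*} [Fintype ι] [DecidableEq ι] (g : ι → F → F) :
    ∑ m : ι → F, χ (∑ i, g i (m i)) = ∏ i, ∑ x, χ (g i x) := by
  simp_rw [map_sum_eq_prod, Fintype.prod_sum]

lemma sum_mul_eq_ite [DecidableEq F] (hχ : χ ≠ 1) (c : F) :
    ∑ x, χ (x * c) = if c = 0 then (Fintype.card F : ℂ) else 0 := by
  simpa using sum_mulShift c (IsPrimitive.of_ne_one hχ)

end AddChar

lemma two_ne_zero_of_odd_card {F : Type} [Field F] [Fintype F] (hodd : Odd (Fintype.card F)) :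
    (2 : F) ≠ 0 :=
  Ring.two_ne_zero fun h => by
    simpa [Nat.odd_iff.mp hodd] using FiniteField.even_card_iff_char_two.mp h

lemma four_ne_zero_of_two_ne_zero {F : Type} [Field F] (h2 : (2 : F) ≠ 0) : (4 : F) ≠ 0 := by
  rw [show (4 : F) = 2 * 2 by norm_num]
  exact mul_ne_zero h2 h2

lemma sum_sq_card_filter_eq {ι κ : Type*} [DecidableEq κ] [Fintype κ] (S : Finset ι)
    (φ : ι → κ) :
    ∑ t, #{p ∈ S | φ p = t} ^ 2 = #{pp ∈ S ×ˢ S | φ pp.1 = φ pp.2} := by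
  rw [card_eq_sum_card_fiberwise (f := fun pp => φ pp.1) (t := univ) (by simp)]
  refine sum_congr rfl fun t _ => ?_
  rw [sq, ← card_product, ← filter_product, filter_filter]
  congr 1
  refine filter_congr fun pp _ => ?_
  constructor
  · rintro ⟨h1, h2⟩
    exact ⟨h1.trans h2.symm, h1⟩
  · rintro ⟨h, h1⟩
    exact ⟨h1, h ▸ h1⟩

lemma sum_product_sum_product_comm {α β M : Type*} [AddCommMonoid M] (s : Finset α)
    (t : Finset β) (f : α → α → β → β → M) :
    ∑ X ∈ s ×ˢ t, ∑ Y ∈ s ×ˢ t, f X.1 Y.1 X.2 Y.2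
      = ∑ p ∈ s ×ˢ s, ∑ p' ∈ t ×ˢ t, f p.1 p.2 p'.1 p'.2 := by
  simp only [sum_product]
  exact sum_congr rfl fun _ _ => sum_comm

section GaussSum

variable {F : Type} [Field F] [Fintype F] {χ : AddChar F ℂ}

def quadGaussSum (χ : AddChar F ℂ) (s : F) : ℂ := ∑ x, χ (s * x ^ 2)

lemma sum_addChar_mul_sq_add_mul (h2 : (2 : F) ≠ 0) {s : F} (hs : s ≠ 0) (c : F) :
    ∑ x, χ (s * x ^ 2 + x * c) = χ (-(c ^ 2 / (4 * s))) * quadGaussSum χ s := by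
  have h4 := four_ne_zero_of_two_ne_zero h2
  rw [quadGaussSum, mul_sum, ← Equiv.sum_comp (Equiv.subRight (c / (2 * s)))]
  refine sum_congr rfl fun y _ => ?_
  rw [← AddChar.map_add_eq_mul, Equiv.subRight_apply]
  congr 1
  field_simp
  ring

lemma quadGaussSum_mul_neg [DecidableEq F] (hχ : χ ≠ 1) (h2 : (2 : F) ≠ 0) {s : F}
    (hs : s ≠ 0) : quadGaussSum χ s * quadGaussSum χ (-s) = Fintype.card F := by
  have hshift : ∀ b u : F,
      χ (s * (u + b) ^ 2 + -s * b ^ 2) = χ (s * u ^ 2) * χ (b * (2 * s * u)) := fun b u => by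
    rw [← AddChar.map_add_eq_mul]
    congr 1
    ring
  calc quadGaussSum χ s * quadGaussSum χ (-s)
      = ∑ b, ∑ u, χ (s * (u + b) ^ 2 + -s * b ^ 2) := by
        rw [quadGaussSum, quadGaussSum, sum_mul_sum, sum_comm]
        refine sum_congr rfl fun b _ => ?_
        rw [← Equiv.sum_comp (Equiv.addRight b)]
        simp only [Equiv.coe_addRight, AddChar.map_add_eq_mul]
    _ = ∑ u, χ (s * u ^ 2) * ∑ b, χ (b * (2 * s * u)) := by
        simp_rw [hshift, mul_sum]
        exact sum_comm
    _ = Fintype.card F := by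
        simp [AddChar.sum_mul_eq_ite hχ, h2, hs]

end GaussSum

section Quadrics

variable {F : Type} [Field F] [Fintype F] {χ : AddChar F ℂ} {n : ℕ}

lemma sum_addChar_mul_nrm_add_dotProduct (h2 : (2 : F) ≠ 0) {s : F} (hs : s ≠ 0)
    (u : Fin n → F) :
    ∑ m : Fin n → F, χ (s * nrm m + m ⬝ᵥ u)
      = χ (-(nrm u / (4 * s))) * quadGaussSum χ s ^ n := by
  have hsplit : ∀ m : Fin n → F, s * nrm m + m ⬝ᵥ u = ∑ i, (s * m i ^ 2 + m i * u i) := by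
    intro m
    rw [nrm, dotProduct, mul_sum, ← sum_add_distrib]
  simp_rw [hsplit, AddChar.sum_pi_map_sum (fun i x => s * x ^ 2 + x * u i),
    sum_addChar_mul_sq_add_mul h2 hs, prod_mul_distrib, prod_const, card_univ, Fintype.card_fin,
    ← AddChar.map_sum_eq_prod, nrm, sum_div, sum_neg_distrib]

lemma sum_addChar_nrmStar_add_dotProduct (s : F) (u v : Fin n → F) :
    ∑ M : (Fin n → F) × (Fin n → F), χ (s * nrmStar M + (M.1 ⬝ᵥ u + M.2 ⬝ᵥ v))
      = (∑ m : Fin n → F, χ (s * nrm m + m ⬝ᵥ u)) * ∑ m : Fin n → F, χ (-s * nrm m + m ⬝ᵥ v) := by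
  rw [sum_mul_sum, Fintype.sum_prod_type]
  refine sum_congr rfl fun m _ => sum_congr rfl fun m' _ => ?_
  rw [← AddChar.map_add_eq_mul, nrmStar]
  congr 1
  ring

variable [DecidableEq F]

lemma sum_addChar_dotProduct (hχ : χ ≠ 1) (u : Fin n → F) :
    ∑ m : Fin n → F, χ (m ⬝ᵥ u) = if u = 0 then (Fintype.card F : ℂ) ^ n else 0 := by
  simp_rw [dotProduct, AddChar.sum_pi_map_sum (fun i x => x * u i), AddChar.sum_mul_eq_ite hχ,
    prod_ite_zero, prod_const, card_univ, Fintype.card_fin, mem_univ, true_implies, ← funext_iff]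
  rfl

lemma sum_addChar_dotProduct_add_dotProduct (hχ : χ ≠ 1) (u v : Fin n → F) :
    ∑ M : (Fin n → F) × (Fin n → F), χ (M.1 ⬝ᵥ u + M.2 ⬝ᵥ v)
      = if u = 0 ∧ v = 0 then (Fintype.card F : ℂ) ^ (2 * n) else 0 := by
  simp_rw [Fintype.sum_prod_type, AddChar.map_add_eq_mul, ← mul_sum, ← sum_mul,
    sum_addChar_dotProduct hχ, ite_mul, mul_ite, zero_mul, mul_zero, two_mul, pow_add]
  by_cases hu : u = 0 <;> by_cases hv : v = 0 <;> simp [hu, hv]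

lemma sum_addChar_nrmStar_add_dotProduct_of_ne_zero (hχ : χ ≠ 1) (h2 : (2 : F) ≠ 0) {s : F}
    (hs : s ≠ 0) (u v : Fin n → F) :
    ∑ M : (Fin n → F) × (Fin n → F), χ (s * nrmStar M + (M.1 ⬝ᵥ u + M.2 ⬝ᵥ v))
      = (Fintype.card F : ℂ) ^ n * χ ((4 * s)⁻¹ * (nrm v - nrm u)) := by
  rw [sum_addChar_nrmStar_add_dotProduct, sum_addChar_mul_nrm_add_dotProduct h2 hs,
    sum_addChar_mul_nrm_add_dotProduct h2 (neg_ne_zero.mpr hs), mul_mul_mul_comm, ← mul_pow,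
    quadGaussSum_mul_neg hχ h2 hs, ← AddChar.map_add_eq_mul, mul_comm]
  congr 2
  rw [mul_neg, div_neg]
  ring

end Quadrics

section Correlation

variable {F : Type} [Field F] {χ : AddChar F ℂ} {ι : Type*}

/-- `charCorr χ S φ r = |∑_{p ∈ S} χ(r φ p)|²`. -/
def charCorr (χ : AddChar F ℂ) (S : Finset ι) (φ : ι → F) (r : F) : ℂ :=
  ∑ p ∈ S, ∑ p' ∈ S, χ (r * (φ p' - φ p))

lemma charCorr_zero (S : Finset ι) (φ : ι → F) : charCorr χ S φ 0 = (#S : ℂ) ^ 2 := by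
  simp [charCorr, sq]

lemma sum_charCorr [Fintype F] [DecidableEq F] (hχ : χ ≠ 1) (S : Finset ι) (φ : ι → F) :
    ∑ r, charCorr χ S φ r = Fintype.card F * ∑ t, (#{p ∈ S | φ p = t} : ℂ) ^ 2 := by
  have hcorr : ∑ r, charCorr χ S φ r
      = ∑ pp ∈ S ×ˢ S, if φ pp.1 = φ pp.2 then (Fintype.card F : ℂ) else 0 := by
    simp only [charCorr, sum_product]
    rw [sum_comm]
    refine sum_congr rfl fun p _ => ?_
    rw [sum_comm]
    refine sum_congr rfl fun p' _ => ?_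
    rw [AddChar.sum_mul_eq_ite hχ]
    exact if_congr (sub_eq_zero.trans eq_comm) rfl rfl
  rw [hcorr, ← sum_filter, sum_const, nsmul_eq_mul, ← sum_sq_card_filter_eq]
  push_cast
  ring

end Correlation

section Fourier

variable {F : Type} [Field F] [Fintype F] {χ : AddChar F ℂ} {n : ℕ}

lemma card_pow_mul_sq_norm_ftDD (D : Finset (Fin n → F)) (M : (Fin n → F) × (Fin n → F)) :
    (Fintype.card F : ℂ) ^ (4 * n) * (‖ftDD χ D M‖ ^ 2 : ℝ)
      = ∑ X ∈ D ×ˢ D, ∑ Y ∈ D ×ˢ D, χ (M.1 ⬝ᵥ (X.1 - Y.1) + M.2 ⬝ᵥ (X.2 - Y.2)) := by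
  have hq : (Fintype.card F : ℂ) ≠ 0 := Nat.cast_ne_zero.mpr Fintype.card_ne_zero
  push_cast
  rw [← Complex.conj_mul', ftDD, map_mul, map_sum, map_inv₀, map_pow, map_natCast]
  simp_rw [← AddChar.map_neg_eq_conj, neg_neg]
  rw [mul_mul_mul_comm, ← mul_assoc, ← mul_inv, ← pow_add, show 2 * n + 2 * n = 4 * n by ring,
    mul_inv_cancel₀ (pow_ne_zero _ hq), one_mul, sum_mul_sum]
  refine sum_congr rfl fun X _ => sum_congr rfl fun Y _ => ?_
  rw [← AddChar.map_add_eq_mul, dotProduct_sub, dotProduct_sub]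
  congr 1
  simp only [dotProduct]
  ring

variable [DecidableEq F]

lemma card_mul_sum_filter_eq_zero (hχ : χ ≠ 1) {α : Type*} [Fintype α] (φ : α → F)
    (g : α → ℂ) :
    (Fintype.card F : ℂ) * ∑ a ∈ univ.filter (fun a => φ a = 0), g a
      = ∑ s, ∑ a, χ (s * φ a) * g a := by
  rw [sum_comm, sum_filter, mul_sum]
  refine sum_congr rfl fun a _ => ?_
  rw [← sum_mul, AddChar.sum_mul_eq_ite hχ, ite_mul, mul_ite, zero_mul, mul_zero]

lemma card_pow_mul_sum_addChar_mul_sq_norm_ftDD (hχ : χ ≠ 1) (h2 : (2 : F) ≠ 0)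
    (D : Finset (Fin n → F)) (s : F) :
    (Fintype.card F : ℂ) ^ (4 * n) *
        ∑ M : (Fin n → F) × (Fin n → F), χ (s * nrmStar M) * (‖ftDD χ D M‖ ^ 2 : ℝ)
      = (Fintype.card F : ℂ) ^ n * charCorr χ (D ×ˢ D) (fun p => nrm (p.1 - p.2)) (4 * s)⁻¹
        + if s = 0 then
            (Fintype.card F : ℂ) ^ (2 * n) * #D ^ 2 - (Fintype.card F : ℂ) ^ n * #D ^ 4
          else 0 := by
  have hexpand : (Fintype.card F : ℂ) ^ (4 * n) *
        ∑ M : (Fin n → F) × (Fin n → F), χ (s * nrmStar M) * (‖ftDD χ D M‖ ^ 2 : ℝ)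
      = ∑ X ∈ D ×ˢ D, ∑ Y ∈ D ×ˢ D, ∑ M : (Fin n → F) × (Fin n → F),
          χ (s * nrmStar M + (M.1 ⬝ᵥ (X.1 - Y.1) + M.2 ⬝ᵥ (X.2 - Y.2))) := by
    simp_rw [mul_sum, mul_left_comm _ (χ _), card_pow_mul_sq_norm_ftDD, mul_sum,
      ← AddChar.map_add_eq_mul]
    rw [sum_comm]
    exact sum_congr rfl fun _ _ => sum_comm
  rw [hexpand]
  rcases eq_or_ne s 0 with rfl | hs
  · simp only [zero_mul, zero_add, sum_addChar_dotProduct_add_dotProduct hχ, sub_eq_zero,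
      mul_zero, inv_zero, charCorr_zero, if_true, ← Prod.ext_iff, sum_ite_eq]
    rw [sum_ite_of_true fun _ => id, sum_const, card_product, nsmul_eq_mul]
    push_cast
    ring
  · simp_rw [sum_addChar_nrmStar_add_dotProduct_of_ne_zero hχ h2 hs, if_neg hs, add_zero,
      charCorr, ← mul_sum]
    congr 1
    exact sum_product_sum_product_comm D D
      (fun x y x' y' => χ ((4 * s)⁻¹ * (nrm (x' - y') - nrm (x - y))))

lemma card_pow_add_card_pow_mul_sum_sq_norm_ftDD (hχ : χ ≠ 1) (h2 : (2 : F) ≠ 0)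
    (D : Finset (Fin n → F)) :
    (#D : ℝ) ^ 4 + (Fintype.card F : ℝ) ^ (3 * n + 1) *
        ∑ M ∈ univ.filter (fun M : (Fin n → F) × (Fin n → F) => nrmStar M = 0),
          ‖ftDD χ D M‖ ^ 2
      = (Fintype.card F : ℝ) *
          ∑ t : F, (((D ×ˢ D).filter (fun p => nrm (p.1 - p.2) = t)).card : ℝ) ^ 2
        + (Fintype.card F : ℝ) ^ n * (#D : ℝ) ^ 2 := by
  set q := (Fintype.card F : ℂ)
  have hq : q ≠ 0 := Nat.cast_ne_zero.mpr Fintype.card_ne_zero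
  set C := charCorr χ (D ×ˢ D) (fun p => nrm (p.1 - p.2))
  -- `s ↦ (4s)⁻¹` is a permutation of all of `F`, `0` included since `0⁻¹ = 0`.
  have hsubst : ∑ s, C (4 * s)⁻¹ = ∑ r, C r :=
    Equiv.sum_comp ((Equiv.mulLeft₀ 4 (four_ne_zero_of_two_ne_zero h2)).trans (Equiv.inv F)) C
  have key : q ^ n * ((#D : ℂ) ^ 4 + q ^ (3 * n + 1) *
        ∑ M ∈ univ.filter (fun M : (Fin n → F) × (Fin n → F) => nrmStar M = 0),
          ((‖ftDD χ D M‖ ^ 2 : ℝ) : ℂ))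
      = q ^ n * (q * ∑ t : F, (((D ×ˢ D).filter (fun p => nrm (p.1 - p.2) = t)).card : ℂ) ^ 2
        + q ^ n * (#D : ℂ) ^ 2) :=
    calc _ = q ^ (4 * n) * (q * ∑ M ∈ univ.filter
              (fun M : (Fin n → F) × (Fin n → F) => nrmStar M = 0),
                ((‖ftDD χ D M‖ ^ 2 : ℝ) : ℂ)) + q ^ n * #D ^ 4 := by
          ring
      _ = ∑ s, (q ^ n * C (4 * s)⁻¹
            + if s = 0 then q ^ (2 * n) * #D ^ 2 - q ^ n * #D ^ 4 else 0) + q ^ n * #D ^ 4 := by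
          rw [card_mul_sum_filter_eq_zero hχ, mul_sum]
          exact congrArg (· + _) (sum_congr rfl fun s _ =>
            card_pow_mul_sum_addChar_mul_sq_norm_ftDD hχ h2 D s)
      _ = q ^ n * ∑ r, C r + q ^ (2 * n) * #D ^ 2 := by
          rw [sum_add_distrib, sum_ite_eq', if_pos (mem_univ _), ← mul_sum, hsubst]
          ring
      _ = _ := by
          rw [sum_charCorr hχ]
          ring
  have hcancel := mul_left_cancel₀ (pow_ne_zero n hq) key
  simp only [q] at hcancel
  exact_mod_cast hcancel

end Fourier

theorem stmt_11_general {F : Type} [Field F] [Fintype F] [DecidableEq F]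
    (hodd : Odd (Fintype.card F)) (χ : AddChar F ℂ) (hχ : χ ≠ 1)
    (d : ℕ) (D : Finset (Fin (2 * d) → F)) :
    ∑ t : F, (((D ×ˢ D).filter (fun p => nrm (p.1 - p.2) = t)).card : ℝ) ^ 2
      ≤ (D.card : ℝ) ^ 4 / (Fintype.card F : ℝ)
        + (Fintype.card F : ℝ) ^ (6 * d) *
            ∑ M ∈ univ.filter
                (fun M : (Fin (2 * d) → F) × (Fin (2 * d) → F) => nrmStar M = 0),
              ‖ftDD χ D M‖ ^ 2 := by
  have hq : (0 : ℝ) < Fintype.card F := Nat.cast_pos.mpr Fintype.card_pos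
  have hid := card_pow_add_card_pow_mul_sum_sq_norm_ftDD hχ (two_ne_zero_of_odd_card hodd) D
  rw [show 3 * (2 * d) + 1 = 6 * d + 1 by ring, pow_succ _ (6 * d)] at hid
  rw [div_add' _ _ _ hq.ne', le_div_iff₀' hq]
  have hdiag : 0 ≤ (Fintype.card F : ℝ) ^ (2 * d) * (#D : ℝ) ^ 2 := by positivity
  linarith

/-- For `D ⊆ F_q^{2d}` with distance counting function `ν`,
`∑_t ν(t)² ≤ |D|⁴/q + q^{6d} ∑_{||M||_* = 0} |(D×D)^(M)|²`. -/
theorem stmt_11 {F : Type} [Field F] [Fintype F] [DecidableEq F]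
    (hodd : Odd (Fintype.card F)) (χ : AddChar F ℂ) (hχ : χ ≠ 1)
    (d : ℕ) (hd : 1 ≤ d) (D : Finset (Fin (2 * d) → F)) :
    ∑ t : F, (((D ×ˢ D).filter (fun p => nrm (p.1 - p.2) = t)).card : ℝ) ^ 2
      ≤ (D.card : ℝ) ^ 4 / (Fintype.card F : ℝ)
        + (Fintype.card F : ℝ) ^ (6 * d) *
            ∑ M ∈ univ.filter
                (fun M : (Fin (2 * d) → F) × (Fin (2 * d) → F) => nrmStar M = 0),
              ‖ftDD χ D M‖ ^ 2 :=
  stmt_11_general hodd χ hχ d D
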